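/- Let P be a bivector field on M and f ∈ C^∞(M) such that [P,P] = (♯_P df) ∧ P. Then for all 1-forms α, β, the bracket {α,β}_P = L_{♯_Pα}β − L_{♯_Pβ}α − d(P(α,β)) satisfies ♯_P{α,β}_P − [♯_Pα, ♯_Pβ] = −½ i(α∧β)((♯_P df)∧P), so the image of ♯_P is closed under the Lie bracket of vector fields. -/

import Mathlib

open scoped BigOperators

/- Coordinate model of multivector calculus on the manifold `M = ℝ^ι`:
vector fields, 1-forms, bivector and trivector fields are given by their
(smooth) components. -/

/-- Partial derivative `∂_l f`. -/
noncomputable def pd {ι : Type*} [Fintype ι] [DecidableEq ι] (l : ι)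
    (f : (ι → ℝ) → ℝ) (x : ι → ℝ) : ℝ :=
  fderiv ℝ f x (Pi.single l 1)

/-- `♯_P α`, defined by `β(♯_P α) = P(α,β)`; in components
`(♯_P α)^j = Σᵢ P^{ij} αᵢ`. -/
noncomputable def sharp {ι : Type*} [Fintype ι]
    (P : (ι → ℝ) → ι → ι → ℝ) (α : (ι → ℝ) → ι → ℝ) :
    (ι → ℝ) → ι → ℝ :=
  fun x j => ∑ i, P x i j * α x i

/-- Evaluation `P(α,β) = Σ P^{ij} αᵢ βⱼ` of a bivector field on two 1-forms. -/
noncomputable def evBV {ι : Type*} [Fintype ι]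
    (P : (ι → ℝ) → ι → ι → ℝ) (α β : (ι → ℝ) → ι → ℝ) : (ι → ℝ) → ℝ :=
  fun x => ∑ i, ∑ j, P x i j * α x i * β x j

/-- Evaluation `T(α,β,γ)` of a trivector field on three 1-forms. -/
noncomputable def evTV {ι : Type*} [Fintype ι]
    (T : (ι → ℝ) → ι → ι → ι → ℝ) (α β γ : (ι → ℝ) → ι → ℝ) : (ι → ℝ) → ℝ :=
  fun x => ∑ i, ∑ j, ∑ k, T x i j k * α x i * β x j * γ x k

/-- Lie bracket of vector fields. -/
noncomputable def vbr {ι : Type*} [Fintype ι] [DecidableEq ι]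
    (X Y : (ι → ℝ) → ι → ℝ) : (ι → ℝ) → ι → ℝ :=
  fun x i => ∑ l, (X x l * pd l (fun y => Y y i) x
    - Y x l * pd l (fun y => X y i) x)

/-- Lie derivative of a 1-form along a vector field:
`(L_X α)ᵢ = Σ_l (X^l ∂_l αᵢ + α_l ∂ᵢ X^l)`. -/
noncomputable def lieCov {ι : Type*} [Fintype ι] [DecidableEq ι]
    (X α : (ι → ℝ) → ι → ℝ) : (ι → ℝ) → ι → ℝ :=
  fun x i => ∑ l, (X x l * pd l (fun y => α y i) x
    + α x l * pd i (fun y => X y l) x)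

/-- Lie derivative of a bivector field along a vector field:
`(L_X P)^{ij} = Σ_l (X^l ∂_l P^{ij} − P^{lj} ∂_l X^i − P^{il} ∂_l X^j)`. -/
noncomputable def lieBV {ι : Type*} [Fintype ι] [DecidableEq ι]
    (X : (ι → ℝ) → ι → ℝ) (P : (ι → ℝ) → ι → ι → ℝ) :
    (ι → ℝ) → ι → ι → ℝ :=
  fun x i j => ∑ l, (X x l * pd l (fun y => P y i j) x
    - P x l j * pd l (fun y => X y i) x
    - P x i l * pd l (fun y => X y j) x)

/-- Schouten–Nijenhuis bracket `[P,P]` of a bivector field with itself: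
`[P,P]^{ijk} = 2 Σ_l (P^{il} ∂_l P^{jk} + P^{jl} ∂_l P^{ki} + P^{kl} ∂_l P^{ij})`. -/
noncomputable def schoutenPP {ι : Type*} [Fintype ι] [DecidableEq ι]
    (P : (ι → ℝ) → ι → ι → ℝ) : (ι → ℝ) → ι → ι → ι → ℝ :=
  fun x i j k => 2 * ∑ l, (P x i l * pd l (fun y => P y j k) x
    + P x j l * pd l (fun y => P y k i) x
    + P x k l * pd l (fun y => P y i j) x)

/-- Wedge `E ∧ P` of a vector field with a bivector field:
`(E∧P)^{ijk} = E^i P^{jk} + E^j P^{ki} + E^k P^{ij}`. -/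
noncomputable def wedgeVP {ι : Type*} [Fintype ι]
    (E : (ι → ℝ) → ι → ℝ) (P : (ι → ℝ) → ι → ι → ℝ) :
    (ι → ℝ) → ι → ι → ι → ℝ :=
  fun x i j k => E x i * P x j k + E x j * P x k i + E x k * P x i j

/-- `dα(X,Y) = Σ (∂ᵢ αⱼ − ∂ⱼ αᵢ) X^i Y^j`. -/
noncomputable def dOne {ι : Type*} [Fintype ι] [DecidableEq ι]
    (α X Y : (ι → ℝ) → ι → ℝ) : (ι → ℝ) → ℝ :=
  fun x => ∑ i, ∑ j, (pd i (fun y => α y j) x - pd j (fun y => α y i) x)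
    * X x i * Y x j

/-- Pairing `γ(X) = Σ γ_k X^k` of a 1-form with a vector field. -/
noncomputable def pairCV {ι : Type*} [Fintype ι]
    (γ X : (ι → ℝ) → ι → ℝ) : (ι → ℝ) → ℝ :=
  fun x => ∑ k, γ x k * X x k

/-- The bracket of 1-forms
`{α,β}_P = L_{♯_P α} β − L_{♯_P β} α − d(P(α,β))`. -/
noncomputable def formBr {ι : Type*} [Fintype ι] [DecidableEq ι]
    (P : (ι → ℝ) → ι → ι → ℝ) (α β : (ι → ℝ) → ι → ℝ) :
    (ι → ℝ) → ι → ℝ :=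
  fun x i => lieCov (sharp P α) β x i - lieCov (sharp P β) α x i
    - pd i (evBV P α β) x

/-- Interior product `i(α∧β)T` of a trivector with a decomposable 2-form:
`(i(α∧β)T)^k = Σ_{i,j} αᵢ βⱼ T^{ijk}`. -/
noncomputable def intTV {ι : Type*} [Fintype ι]
    (α β : (ι → ℝ) → ι → ℝ) (T : (ι → ℝ) → ι → ι → ι → ℝ) :
    (ι → ℝ) → ι → ℝ :=
  fun x k => ∑ i, ∑ j, α x i * β x j * T x i j k


section helpers
lemma pd_neg' {ι : Type*} [Fintype ι] [DecidableEq ι] (l : ι) (g : (ι → ℝ) → ℝ) (x : ι → ℝ) :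
    pd l (fun y => -g y) x = -pd l g x := by
  simp [pd, fderiv_neg]

lemma pd_sum' {ι : Type*} [Fintype ι] [DecidableEq ι] {κ : Type*} (s : Finset κ)
    (l : ι) (g : κ → (ι → ℝ) → ℝ) (x : ι → ℝ)
    (hg : ∀ k ∈ s, DifferentiableAt ℝ (g k) x) :
    pd l (fun y => ∑ k ∈ s, g k y) x = ∑ k ∈ s, pd l (g k) x := by
  simp only [pd]
  rw [fderiv_fun_sum hg]
  simp

lemma pd_mul' {ι : Type*} [Fintype ι] [DecidableEq ι] (l : ι) (g h : (ι → ℝ) → ℝ) (x : ι → ℝ)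
    (hg : DifferentiableAt ℝ g x) (hh : DifferentiableAt ℝ h x) :
    pd l (fun y => g y * h y) x = pd l g x * h x + g x * pd l h x := by
  simp only [pd]
  rw [fderiv_fun_mul hg hh]
  simp only [ContinuousLinearMap.add_apply, ContinuousLinearMap.smul_apply, smul_eq_mul]; ring

variable {ι : Type*} [Fintype ι] [DecidableEq ι]

lemma pd_sharp (P : (ι → ℝ) → ι → ι → ℝ) (α : (ι → ℝ) → ι → ℝ)
    (hP : ∀ i j, ContDiff ℝ (⊤ : ℕ∞) fun x => P x i j)
    (hα : ∀ i, ContDiff ℝ (⊤ : ℕ∞) fun x => α x i) (l m : ι) (x : ι → ℝ) :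
    pd l (fun y => sharp P α y m) x
      = ∑ i, (pd l (fun y => P y i m) x * α x i
          + P x i m * pd l (fun y => α y i) x) := by
  unfold sharp
  rw [pd_sum']
  · exact Finset.sum_congr rfl fun i _ => pd_mul' l _ _ x
      ((hP i m).differentiable (by simp) x) ((hα i).differentiable (by simp) x)
  · exact fun i _ => (((hP i m).differentiable (by simp) x).mul
      ((hα i).differentiable (by simp) x))

lemma pd_evBV (P : (ι → ℝ) → ι → ι → ℝ) (α β : (ι → ℝ) → ι → ℝ)
    (hP : ∀ i j, ContDiff ℝ (⊤ : ℕ∞) fun x => P x i j)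
    (hα : ∀ i, ContDiff ℝ (⊤ : ℕ∞) fun x => α x i)
    (hβ : ∀ i, ContDiff ℝ (⊤ : ℕ∞) fun x => β x i) (m : ι) (x : ι → ℝ) :
    pd m (evBV P α β) x
      = ∑ i, ∑ j, (pd m (fun y => P y i j) x * α x i * β x j
          + P x i j * pd m (fun y => α y i) x * β x j
          + P x i j * α x i * pd m (fun y => β y j) x) := by
  unfold evBV
  rw [pd_sum']
  · refine Finset.sum_congr rfl fun i _ => ?_
    rw [pd_sum']
    · refine Finset.sum_congr rfl fun j _ => ?_
      rw [pd_mul' m _ _ x ((((hP i j).differentiable (by simp) x).fun_mul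
          ((hα i).differentiable (by simp) x))) ((hβ j).differentiable (by simp) x),
        pd_mul' m _ _ x ((hP i j).differentiable (by simp) x)
          ((hα i).differentiable (by simp) x)]
      ring
    · exact fun j _ => ((((hP i j).differentiable (by simp) x).mul
        ((hα i).differentiable (by simp) x)).mul ((hβ j).differentiable (by simp) x))
  · exact fun i _ => DifferentiableAt.fun_sum fun j _ =>
      ((((hP i j).differentiable (by simp) x).mul
        ((hα i).differentiable (by simp) x)).mul ((hβ j).differentiable (by simp) x))
set_option linter.unusedSectionVars false

lemma sum3_comm12 (g : ι → ι → ι → ℝ) :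
    (∑ u, ∑ v, ∑ w, g u v w) = ∑ v, ∑ u, ∑ w, g u v w := Finset.sum_comm

lemma sum3_comm23 (g : ι → ι → ι → ℝ) :
    (∑ u, ∑ v, ∑ w, g u v w) = ∑ u, ∑ w, ∑ v, g u v w :=
  Finset.sum_congr rfl fun _ _ => Finset.sum_comm

lemma sum3_cycle (g : ι → ι → ι → ℝ) :
    (∑ u, ∑ v, ∑ w, g u v w) = ∑ v, ∑ w, ∑ u, g u v w := by
  rw [sum3_comm12]; exact Finset.sum_congr rfl fun _ _ => Finset.sum_comm

lemma sum3_rev (g : ι → ι → ι → ℝ) :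
    (∑ u, ∑ v, ∑ w, g u v w) = ∑ w, ∑ v, ∑ u, g u v w := by
  rw [sum3_cycle]; exact Finset.sum_comm

lemma sum3_neg (g : ι → ι → ι → ℝ) :
    (∑ u, ∑ v, ∑ w, -g u v w) = -∑ u, ∑ v, ∑ w, g u v w := by simp

lemma key (p : ι → ι → ℝ) (dp : ι → ι → ι → ℝ) (a b : ι → ℝ) (da db : ι → ι → ℝ)
    (hp : ∀ i j, p i j = -p j i) (hdp : ∀ l i j, dp l i j = -dp l j i) (k : ι) :
    ∑ m, p m k * ((∑ l, ((∑ i, p i l * a i) * db l m + b l * ∑ i, (dp m i l * a i + p i l * da m i)))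
      - (∑ l, ((∑ i, p i l * b i) * da l m + a l * ∑ i, (dp m i l * b i + p i l * db m i)))
      - ∑ i, ∑ j, (dp m i j * a i * b j + p i j * da m i * b j + p i j * a i * db m j))
    - ∑ l, ((∑ i, p i l * a i) * ∑ i, (dp l i k * b i + p i k * db l i)
          - (∑ i, p i l * b i) * ∑ i, (dp l i k * a i + p i k * da l i))
    = -(1/2) * ∑ i, ∑ j, a i * b j * (2 * ∑ l, (p i l * dp l j k + p j l * dp l k i + p k l * dp l i j)) := by
  simp only [Finset.mul_sum, Finset.sum_mul, mul_add, add_mul, mul_sub, sub_mul,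
    Finset.sum_add_distrib, Finset.sum_sub_distrib, neg_mul, one_mul, neg_div]
  -- canonical quantities
  set Q1 := ∑ i : ι, ∑ j : ι, ∑ l : ι, a i * b j * (p i l * dp l j k) with hQ1
  set Q2 := ∑ i : ι, ∑ j : ι, ∑ l : ι, a i * b j * (p j l * dp l i k) with hQ2
  set Q3 := ∑ i : ι, ∑ j : ι, ∑ l : ι, a i * b j * (p k l * dp l i j) with hQ3
  have h1 : (∑ u : ι, ∑ v : ι, ∑ w : ι, p u k * (p w v * a w * db v u))
      = ∑ u : ι, ∑ v : ι, ∑ w : ι, p w u * a w * (p v k * db u v) := by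
    rw [Finset.sum_comm]
    exact Finset.sum_congr rfl fun u _ => Finset.sum_congr rfl fun v _ =>
      Finset.sum_congr rfl fun w _ => by ring
  have h2 : (∑ u : ι, ∑ v : ι, ∑ w : ι, p u k * (a v * (p w v * db u w)))
      = -∑ u : ι, ∑ v : ι, ∑ w : ι, p u k * (p v w * a v * db u w) := by
    rw [← sum3_neg]
    exact Finset.sum_congr rfl fun u _ => Finset.sum_congr rfl fun v _ =>
      Finset.sum_congr rfl fun w _ => by rw [hp w v]; ring
  have h3 : (∑ u : ι, ∑ v : ι, ∑ w : ι, p u k * (b v * (p w v * da u w)))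
      = ∑ u : ι, ∑ v : ι, ∑ w : ι, p u k * (p v w * da u v * b w) := by
    rw [sum3_comm23]
    exact Finset.sum_congr rfl fun u _ => Finset.sum_congr rfl fun v _ =>
      Finset.sum_congr rfl fun w _ => by ring
  have h4 : (∑ u : ι, ∑ v : ι, ∑ w : ι, p u k * (p w v * b w * da v u))
      = ∑ u : ι, ∑ v : ι, ∑ w : ι, p w u * b w * (p v k * da u v) := by
    rw [Finset.sum_comm]
    exact Finset.sum_congr rfl fun u _ => Finset.sum_congr rfl fun v _ =>
      Finset.sum_congr rfl fun w _ => by ring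
  have hS2 : (∑ u : ι, ∑ v : ι, ∑ w : ι, p u k * (b v * (dp u w v * a w))) = -Q3 := by
    rw [hQ3, ← sum3_neg, sum3_rev]
    exact Finset.sum_congr rfl fun i _ => Finset.sum_congr rfl fun j _ =>
      Finset.sum_congr rfl fun l _ => by rw [hp l k]; ring
  have hS5 : (∑ u : ι, ∑ v : ι, ∑ w : ι, p u k * (a v * (dp u w v * b w))) = Q3 := by
    rw [hQ3, sum3_cycle]
    exact Finset.sum_congr rfl fun i _ => Finset.sum_congr rfl fun j _ =>
      Finset.sum_congr rfl fun l _ => by rw [hp l k, hdp l j i]; ring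
  have hS7 : (∑ u : ι, ∑ v : ι, ∑ w : ι, p u k * (dp u v w * a v * b w)) = -Q3 := by
    rw [hQ3, ← sum3_neg, sum3_cycle]
    exact Finset.sum_congr rfl fun i _ => Finset.sum_congr rfl fun j _ =>
      Finset.sum_congr rfl fun l _ => by rw [hp l k]; ring
  have hS10 : (∑ u : ι, ∑ v : ι, ∑ w : ι, p w u * a w * (dp u v k * b v)) = Q1 := by
    rw [hQ1, sum3_rev]
    exact Finset.sum_congr rfl fun i _ => Finset.sum_congr rfl fun j _ =>
      Finset.sum_congr rfl fun l _ => by ring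
  have hS12 : (∑ u : ι, ∑ v : ι, ∑ w : ι, p w u * b w * (dp u v k * a v)) = Q2 := by
    rw [hQ2, sum3_cycle]
    exact Finset.sum_congr rfl fun i _ => Finset.sum_congr rfl fun j _ =>
      Finset.sum_congr rfl fun l _ => by ring
  have hR1 : (∑ u : ι, ∑ v : ι, ∑ w : ι, -(1 / 2 * (a u * b v * (2 * (p u w * dp w v k))))) = -Q1 := by
    rw [hQ1, ← sum3_neg]
    exact Finset.sum_congr rfl fun i _ => Finset.sum_congr rfl fun j _ =>
      Finset.sum_congr rfl fun l _ => by ring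
  have hR2 : (∑ u : ι, ∑ v : ι, ∑ w : ι, -(1 / 2 * (a u * b v * (2 * (p v w * dp w k u))))) = Q2 := by
    rw [hQ2]
    exact Finset.sum_congr rfl fun i _ => Finset.sum_congr rfl fun j _ =>
      Finset.sum_congr rfl fun l _ => by rw [hdp l k i]; ring
  have hR3 : (∑ u : ι, ∑ v : ι, ∑ w : ι, -(1 / 2 * (a u * b v * (2 * (p k w * dp w u v))))) = -Q3 := by
    rw [hQ3, ← sum3_neg]
    exact Finset.sum_congr rfl fun i _ => Finset.sum_congr rfl fun j _ =>
      Finset.sum_congr rfl fun l _ => by ring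
  linarith [h1, h2, h3, h4, hS2, hS5, hS7, hS10, hS12, hR1, hR2, hR3]


lemma sum3_cycle' {ι : Type*} [Fintype ι] (g : ι → ι → ι → ℝ) :
    (∑ u, ∑ v, ∑ w, g u v w) = ∑ v, ∑ w, ∑ u, g u v w := by
  rw [Finset.sum_comm]; exact Finset.sum_congr rfl fun _ _ => Finset.sum_comm

lemma key2 (p : ι → ι → ℝ) (a b g : ι → ℝ) (hp : ∀ i j, p i j = -p j i) (k : ι) :
    1/2 * ∑ i, ∑ j, a i * b j * ((∑ u, p u i * g u) * p j k + (∑ u, p u j * g u) * p k i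
        + (∑ u, p u k * g u) * p i j)
    = ∑ i, p i k * (1/2 * (b i * ∑ v, a v * ∑ u, p u v * g u
        - a i * ∑ v, b v * ∑ u, p u v * g u + g i * ∑ u, ∑ v, p u v * a u * b v)) := by
  simp only [Finset.mul_sum, Finset.sum_mul, mul_add, add_mul, mul_sub, sub_mul,
    Finset.sum_add_distrib, Finset.sum_sub_distrib]
  have h1 : (∑ u : ι, ∑ v : ι, ∑ w : ι, 1 / 2 * (a u * b v * (p w u * g w * p v k)))
      = ∑ u : ι, ∑ v : ι, ∑ w : ι, p u k * (1 / 2 * (b u * (a v * (p w v * g w)))) := by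
    rw [Finset.sum_comm]
    exact Finset.sum_congr rfl fun u _ => Finset.sum_congr rfl fun v _ =>
      Finset.sum_congr rfl fun w _ => by ring
  have h2 : (∑ u : ι, ∑ v : ι, ∑ w : ι, 1 / 2 * (a u * b v * (p w v * g w * p k u)))
      = -∑ u : ι, ∑ v : ι, ∑ w : ι, p u k * (1 / 2 * (a u * (b v * (p w v * g w)))) := by
    rw [show -(∑ u : ι, ∑ v : ι, ∑ w : ι, p u k * (1 / 2 * (a u * (b v * (p w v * g w)))))
        = ∑ u : ι, ∑ v : ι, ∑ w : ι, -(p u k * (1 / 2 * (a u * (b v * (p w v * g w))))) by simp]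
    exact Finset.sum_congr rfl fun u _ => Finset.sum_congr rfl fun v _ =>
      Finset.sum_congr rfl fun w _ => by rw [hp k u]; ring
  have h3 : (∑ u : ι, ∑ v : ι, ∑ w : ι, p u k * (1 / 2 * (g u * (p v w * a v * b w))))
      = ∑ u : ι, ∑ v : ι, ∑ w : ι, 1 / 2 * (a u * b v * (p w k * g w * p u v)) := by
    rw [sum3_cycle']
    exact Finset.sum_congr rfl fun u _ => Finset.sum_congr rfl fun v _ =>
      Finset.sum_congr rfl fun w _ => by ring
  linarith [h1, h2, h3]

end helpers

/-- If `[P,P] = (♯_P df) ∧ P`, then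
`♯_P{α,β}_P − [♯_P α, ♯_P β] = −½ i(α∧β)((♯_P df) ∧ P)`, so the image of
`♯_P` is closed under the Lie bracket of vector fields. -/
theorem stmt18 (ι : Type*) [Fintype ι] [DecidableEq ι]
    (P : (ι → ℝ) → ι → ι → ℝ) (f : (ι → ℝ) → ℝ) (α β : (ι → ℝ) → ι → ℝ)
    (hPskew : ∀ x i j, P x i j = -P x j i)
    (hP : ∀ i j, ContDiff ℝ (⊤ : ℕ∞) fun x => P x i j)
    (hf : ContDiff ℝ (⊤ : ℕ∞) f)
    (hα : ∀ i, ContDiff ℝ (⊤ : ℕ∞) fun x => α x i)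
    (hβ : ∀ i, ContDiff ℝ (⊤ : ℕ∞) fun x => β x i)
    (hconf : ∀ x i j k, schoutenPP P x i j k =
      wedgeVP (sharp P fun y i => pd i f y) P x i j k) :
    (∀ x k, sharp P (formBr P α β) x k - vbr (sharp P α) (sharp P β) x k =
      -(1 / 2) * intTV α β (wedgeVP (sharp P fun y i => pd i f y) P) x k) ∧
    (∀ x, ∃ c : ι → ℝ, ∀ k,
      vbr (sharp P α) (sharp P β) x k = ∑ i, P x i k * c i) := by
  have hR : ∀ x k, intTV α β (wedgeVP (sharp P fun y i => pd i f y) P) x k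
      = ∑ i, ∑ j, α x i * β x j * schoutenPP P x i j k := by
    intro x k
    exact Finset.sum_congr rfl fun i _ => Finset.sum_congr rfl fun j _ => by rw [← hconf]
  have main : ∀ x k, sharp P (formBr P α β) x k - vbr (sharp P α) (sharp P β) x k =
      -(1 / 2) * ∑ i, ∑ j, α x i * β x j * schoutenPP P x i j k := by
    intro x k
    unfold vbr formBr lieCov
    simp only [pd_sharp P α hP hα, pd_sharp P β hP hβ, pd_evBV P α β hP hα hβ]
    have hdp : ∀ l i j, pd l (fun y => P y i j) x = -pd l (fun y => P y j i) x := by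
      intro l i j
      have : (fun y => P y i j) = fun y => -P y j i := funext fun y => hPskew y i j
      rw [this, pd_neg']
    unfold sharp schoutenPP
    exact key (P x) (fun l i j => pd l (fun y => P y i j) x) (α x) (β x)
      (fun l i => pd l (fun y => α y i) x) (fun l i => pd l (fun y => β y i) x)
      (fun i j => hPskew x i j) hdp k
  refine ⟨fun x k => by rw [hR x k]; exact main x k, ?_⟩
  intro x
  refine ⟨fun i => formBr P α β x i + (1/2) * (β x i * pairCV α (sharp P fun y m => pd m f y) x
      - α x i * pairCV β (sharp P fun y m => pd m f y) x + pd i f x * evBV P α β x), fun k => ?_⟩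
  have h := main x k
  rw [show vbr (sharp P α) (sharp P β) x k = sharp P (formBr P α β) x k
      + (1/2) * ∑ i, ∑ j, α x i * β x j * schoutenPP P x i j k from by linarith]
  have hc : ∑ i, P x i k * (formBr P α β x i + (1/2) * (β x i * pairCV α (sharp P fun y m => pd m f y) x
        - α x i * pairCV β (sharp P fun y m => pd m f y) x + pd i f x * evBV P α β x))
      = (∑ i, P x i k * formBr P α β x i)
        + ∑ i, P x i k * ((1/2) * (β x i * pairCV α (sharp P fun y m => pd m f y) x
          - α x i * pairCV β (sharp P fun y m => pd m f y) x + pd i f x * evBV P α β x)) := by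
    rw [← Finset.sum_add_distrib]
    exact Finset.sum_congr rfl fun i _ => by ring
  rw [hc]
  have hsp : sharp P (formBr P α β) x k = ∑ i, P x i k * formBr P α β x i := rfl
  rw [hsp]
  congr 1
  simp only [hconf]
  unfold wedgeVP sharp pairCV evBV
  exact key2 (P x) (α x) (β x) (fun u => pd u f x) (fun i j => hPskew x i j) k
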